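/- arXiv:2601.02022 — 4 statements merged into one kernel-verified Lean document; each statement's English description precedes it below -/
import Mathlib

section
/- Let V₀ be a d×d real symmetric positive definite matrix, let u₀, u₁, …, u_{T−1} ∈ ℝᵈ satisfy ‖u_t‖₂ ≤ 1, and define V_{t+1} = V_t + u_t u_tᵀ. Then for every p ∈ (0, 1], ∑_{t=0}^{T−1} ‖u_t‖_{V_t⁻¹}^{2p} ≤ 2^p T^{1−p} (log(det V_T / det V₀))^p + (3/(2p)) (tr(V₀^{−p}) − tr(V_T^{−p})). -/
/-!
Write `xₜ = ‖uₜ‖²_{Vₜ⁻¹}`. Since `det Vₜ₊₁ = det Vₜ · (1 + xₜ)`, rounds with `xₜ ≤ 2` are paid for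
by the log-determinant through `x ≤ 2 log (1 + x)` and the power-mean inequality
`∑ xₜ ^ p ≤ T ^ (1 - p) (∑ xₜ) ^ p`. Rounds with `xₜ > 2` are paid for by the decrease of the
potential `tr Vₜ^{-p}`: by Sherman–Morrison `Vₜ₊₁⁻¹ = Vₜ⁻¹ - (1 + xₜ)⁻¹ wwᵀ` with `w = Vₜ⁻¹uₜ`, and
Klein's trace inequality for the concave `x ↦ x ^ p`, applied to `Vₜ⁻¹` and `Vₜ₊₁⁻¹`, bounds the
decrease below by `p (1 + xₜ)⁻¹ uₜᵀ Vₜ^{-(p+1)} uₜ`. As `‖uₜ‖ ≤ 1`, Jensen's inequality in the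
eigenbasis of `Vₜ` gives `uₜᵀ Vₜ^{-(p+1)} uₜ ≥ xₜ ^ (p + 1)`, and `xₜ / (1 + xₜ) ≥ 2 / 3`.
-/

open Matrix

/-- The Mahalanobis norm `‖x‖_B = √(xᵀ B x)`. -/
noncomputable def mnorm {d : ℕ} (B : Matrix (Fin d) (Fin d) ℝ) (x : Fin d → ℝ) : ℝ :=
  Real.sqrt (x ⬝ᵥ B *ᵥ x)

/-- Real matrix power of a symmetric matrix, via the spectral decomposition
(junk value `0` on non-Hermitian matrices). -/
noncomputable def mpow {d : ℕ} (A : Matrix (Fin d) (Fin d) ℝ) (q : ℝ) :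
    Matrix (Fin d) (Fin d) ℝ :=
  if hA : A.IsHermitian then
    (hA.eigenvectorUnitary : Matrix (Fin d) (Fin d) ℝ) *
      Matrix.diagonal (fun i => hA.eigenvalues i ^ q) *
      star (hA.eigenvectorUnitary : Matrix (Fin d) (Fin d) ℝ)
  else 0

lemma rpow_le_rpow_add_mul_rpow_sub_one_mul_sub {a b p : ℝ} (ha : 0 < a) (hb : 0 ≤ b)
    (hp0 : 0 ≤ p) (hp1 : p ≤ 1) : b ^ p ≤ a ^ p + p * a ^ (p - 1) * (b - a) := by
  have hber := rpow_one_add_le_one_add_mul_self (s := b / a - 1)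
    (by linarith [div_nonneg hb ha.le]) hp0 hp1
  rw [add_sub_cancel, Real.div_rpow hb ha.le, div_le_iff₀ (Real.rpow_pos_of_pos ha p)] at hber
  calc b ^ p ≤ (1 + p * (b / a - 1)) * a ^ p := hber
    _ = a ^ p + p * a ^ (p - 1) * (b - a) := by
      rw [Real.rpow_sub_one ha.ne']
      field_simp

lemma rpow_sum_mul_le_sum_mul_rpow {ι : Type*} (s : Finset ι) {w x : ι → ℝ}
    (hw : ∀ i, 0 ≤ w i) (hx : ∀ i, 0 ≤ x i) (hw1 : ∑ i ∈ s, w i ≤ 1) {r : ℝ} (hr : 1 ≤ r) :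
    (∑ i ∈ s, w i * x i) ^ r ≤ ∑ i ∈ s, w i * x i ^ r := by
  have hr0 : 0 < r := zero_lt_one.trans_le hr
  have hsum : 0 ≤ ∑ i ∈ s, w i * x i ^ r :=
    Finset.sum_nonneg fun i _ ↦ mul_nonneg (hw i) (Real.rpow_nonneg (hx i) r)
  have holder := Real.inner_le_weight_mul_Lp_of_nonneg s hr w x hw hx
  have hmass : (∑ i ∈ s, w i) ^ (1 - r⁻¹) ≤ 1 :=
    Real.rpow_le_one (Finset.sum_nonneg fun i _ ↦ hw i) hw1
      (sub_nonneg.2 (inv_le_one_of_one_le₀ hr))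
  calc (∑ i ∈ s, w i * x i) ^ r
      ≤ ((∑ i ∈ s, w i * x i ^ r) ^ r⁻¹) ^ r := by
        gcongr
        · exact Finset.sum_nonneg fun i _ ↦ mul_nonneg (hw i) (hx i)
        · exact holder.trans (mul_le_of_le_one_left (Real.rpow_nonneg hsum _) hmass)
    _ = ∑ i ∈ s, w i * x i ^ r := Real.rpow_inv_rpow hsum hr0.ne'

lemma sum_rpow_le_card_rpow_mul_rpow_sum {ι : Type*} (s : Finset ι) {x : ι → ℝ}
    (hx : ∀ i, 0 ≤ x i) {p : ℝ} (hp0 : 0 < p) (hp1 : p ≤ 1) :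
    ∑ i ∈ s, x i ^ p ≤ (s.card : ℝ) ^ (1 - p) * (∑ i ∈ s, x i) ^ p := by
  have holder := Real.inner_le_weight_mul_Lp_of_nonneg s (one_le_inv_iff₀.2 ⟨hp0, hp1⟩)
    (fun _ ↦ 1) (fun i ↦ x i ^ p) (fun _ ↦ zero_le_one) (fun i ↦ Real.rpow_nonneg (hx i) p)
  simpa only [one_mul, Finset.sum_const, nsmul_eq_mul, mul_one, inv_inv,
    Real.rpow_rpow_inv (hx _) hp0.ne'] using holder

lemma le_two_mul_log_one_add {x : ℝ} (hx0 : 0 ≤ x) (hx2 : x ≤ 2) : x ≤ 2 * Real.log (1 + x) := by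
  have hlog3 : 1 ≤ Real.log 3 := by
    rw [Real.le_log_iff_exp_le (by norm_num)]
    linarith [Real.exp_one_lt_d9]
  -- concavity of `log` on `[1, 3]`, with `1 + x = (1 - x / 2) • 1 + (x / 2) • 3`
  have hchord := strictConcaveOn_log_Ioi.concaveOn.2 (Set.mem_Ioi.2 one_pos)
    (Set.mem_Ioi.2 (by norm_num : (0 : ℝ) < 3)) (by linarith : 0 ≤ 1 - x / 2)
    (by linarith : 0 ≤ x / 2) (by ring)
  simp only [smul_eq_mul, Real.log_one, mul_zero, zero_add] at hchord
  rw [show (1 - x / 2) * 1 + x / 2 * 3 = 1 + x by ring] at hchord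
  nlinarith

lemma rpow_le_of_two_lt {x p : ℝ} (hx : 2 < x) (hp0 : 0 < p) :
    x ^ p ≤ 3 / (2 * p) * (p * x ^ (p + 1) / (1 + x)) := by
  have hxp : 0 < x ^ p := Real.rpow_pos_of_pos (by linarith) p
  rw [Real.rpow_add_one (by linarith) p, show 3 / (2 * p) * (p * (x ^ p * x) / (1 + x)) =
    x ^ p * (3 * x / (2 * (1 + x))) by field_simp, le_mul_iff_one_le_right hxp,
    one_le_div (by linarith)]
  linarith

lemma sum_rpow_le_of_le_two {ι : Type*} {s S : Finset ι} (hSs : S ⊆ s) {x : ι → ℝ}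
    (hx : ∀ i, 0 ≤ x i) (hx2 : ∀ i ∈ S, x i ≤ 2) {p : ℝ} (hp0 : 0 < p) (hp1 : p ≤ 1) :
    ∑ i ∈ S, x i ^ p ≤ 2 ^ p * (s.card : ℝ) ^ (1 - p) * (∑ i ∈ s, Real.log (1 + x i)) ^ p := by
  have hlog : 0 ≤ ∑ i ∈ s, Real.log (1 + x i) :=
    Finset.sum_nonneg fun i _ ↦ Real.log_nonneg (by linarith [hx i])
  have hS0 : 0 ≤ ∑ i ∈ S, x i := Finset.sum_nonneg fun i _ ↦ hx i
  have hS : ∑ i ∈ S, x i ≤ 2 * ∑ i ∈ s, Real.log (1 + x i) := by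
    rw [Finset.mul_sum]
    refine (Finset.sum_le_sum fun i hi ↦ le_two_mul_log_one_add (hx i) (hx2 i hi)).trans ?_
    exact Finset.sum_le_sum_of_subset_of_nonneg hSs fun i _ _ ↦
      mul_nonneg zero_le_two (Real.log_nonneg (by linarith [hx i]))
  have hcard : (S.card : ℝ) ≤ s.card := by exact_mod_cast Finset.card_le_card hSs
  calc ∑ i ∈ S, x i ^ p ≤ (S.card : ℝ) ^ (1 - p) * (∑ i ∈ S, x i) ^ p :=
        sum_rpow_le_card_rpow_mul_rpow_sum S hx hp0 hp1
    _ ≤ (s.card : ℝ) ^ (1 - p) * (2 * ∑ i ∈ s, Real.log (1 + x i)) ^ p :=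
        mul_le_mul (Real.rpow_le_rpow (Nat.cast_nonneg _) hcard (by linarith))
          (Real.rpow_le_rpow hS0 hS hp0.le) (Real.rpow_nonneg hS0 _)
          (Real.rpow_nonneg (Nat.cast_nonneg _) _)
    _ = 2 ^ p * (s.card : ℝ) ^ (1 - p) * (∑ i ∈ s, Real.log (1 + x i)) ^ p := by
        rw [Real.mul_rpow zero_le_two hlog]
        ring

theorem sum_rpow_le_of_potential_drop {x τ : ℕ → ℝ} {T : ℕ} (hx : ∀ t, 0 ≤ x t) {p : ℝ}
    (hp0 : 0 < p) (hp1 : p ≤ 1)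
    (hτ : ∀ t < T, p * x t ^ (p + 1) / (1 + x t) ≤ τ t - τ (t + 1)) :
    ∑ t ∈ Finset.range T, x t ^ p ≤
      2 ^ p * (T : ℝ) ^ (1 - p) * (∑ t ∈ Finset.range T, Real.log (1 + x t)) ^ p +
        3 / (2 * p) * (τ 0 - τ T) := by
  have hτ0 (t : ℕ) (ht : t ∈ Finset.range T) : 0 ≤ 3 / (2 * p) * (τ t - τ (t + 1)) :=
    mul_nonneg (by positivity) ((div_nonneg (mul_nonneg hp0.le (Real.rpow_nonneg (hx t) _))
      (by linarith [hx t])).trans (hτ t (Finset.mem_range.1 ht)))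
  rw [← Finset.sum_filter_add_sum_filter_not _ (fun t ↦ x t ≤ 2)]
  gcongr ?_ + ?_
  · simpa only [Finset.card_range] using
      sum_rpow_le_of_le_two (Finset.filter_subset _ (Finset.range T)) hx
        (fun t ht ↦ (Finset.mem_filter.1 ht).2) hp0 hp1
  · calc ∑ t ∈ (Finset.range T).filter (fun t ↦ ¬x t ≤ 2), x t ^ p
        ≤ ∑ t ∈ (Finset.range T).filter (fun t ↦ ¬x t ≤ 2), 3 / (2 * p) * (τ t - τ (t + 1)) :=
          Finset.sum_le_sum fun t ht ↦ by
            obtain ⟨htT, hxt⟩ := Finset.mem_filter.1 ht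
            exact (rpow_le_of_two_lt (not_le.1 hxt) hp0).trans
              (mul_le_mul_of_nonneg_left (hτ t (Finset.mem_range.1 htT)) (by positivity))
      _ ≤ ∑ t ∈ Finset.range T, 3 / (2 * p) * (τ t - τ (t + 1)) :=
          Finset.sum_le_sum_of_subset_of_nonneg (Finset.filter_subset _ _) fun t ht _ ↦ hτ0 t ht
      _ = 3 / (2 * p) * (τ 0 - τ T) := by rw [← Finset.mul_sum, Finset.sum_range_sub']

namespace Matrix

variable {n : Type*} [Fintype n] {A B : Matrix n n ℝ}

lemma IsHermitian.trace_mul_vecMulVec_mulVec (hA : A.IsHermitian) (C : Matrix n n ℝ)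
    (u : n → ℝ) : (C * vecMulVec (A *ᵥ u) (A *ᵥ u)).trace = u ⬝ᵥ (A * C * A) *ᵥ u := by
  have hAu : u ᵥ* A = A *ᵥ u := by
    rw [← mulVec_transpose, ← conjTranspose_eq_transpose_of_trivial, hA.eq]
  rw [mul_vecMulVec, trace_vecMulVec, ← mulVec_mulVec, ← mulVec_mulVec, dotProduct_mulVec u A,
    hAu, dotProduct_comm]

variable [DecidableEq n]

theorem det_add_vecMulVec {R : Type*} [CommRing R] {M : Matrix n n R} (hM : IsUnit M.det)
    (u v : n → R) : (M + vecMulVec u v).det = M.det * (1 + v ⬝ᵥ M⁻¹ *ᵥ u) := by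
  rw [vecMulVec_eq Unit, det_add_replicateCol_mul_replicateRow hM, det_unique (n := Unit),
    add_apply, one_apply_eq, ← replicateRow_vecMul, replicateRow_mul_replicateCol_apply,
    dotProduct_mulVec]

theorem inv_add_vecMulVec {K : Type*} [Field K] {M : Matrix n n K} (hM : IsUnit M.det)
    (u v : n → K) (h : 1 + v ⬝ᵥ M⁻¹ *ᵥ u ≠ 0) :
    (M + vecMulVec u v)⁻¹ =
      M⁻¹ - (1 + v ⬝ᵥ M⁻¹ *ᵥ u)⁻¹ • vecMulVec (M⁻¹ *ᵥ u) (v ᵥ* M⁻¹) := by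
  refine inv_eq_right_inv ?_
  have hc : (1 + v ⬝ᵥ M⁻¹ *ᵥ u)⁻¹ * (1 + v ⬝ᵥ M⁻¹ *ᵥ u) = 1 := inv_mul_cancel₀ h
  rw [Matrix.add_mul, Matrix.mul_sub, Matrix.mul_sub, Matrix.mul_smul, Matrix.mul_smul,
    mul_nonsing_inv _ hM, mul_vecMulVec, mulVec_mulVec, mul_nonsing_inv _ hM, one_mulVec,
    vecMulVec_mul, vecMulVec_mul_vecMulVec, vecMulVec_smul]
  linear_combination (norm := module) (-1 : K) • hc • vecMulVec u (v ᵥ* M⁻¹)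

lemma PosDef.pos_of_mem_spectrum (hA : A.PosDef) {x : ℝ} (hx : x ∈ spectrum ℝ A) : 0 < x := by
  rw [hA.1.spectrum_real_eq_range_eigenvalues] at hx
  obtain ⟨i, rfl⟩ := hx
  exact hA.eigenvalues_pos i

lemma PosSemidef.nonneg_of_mem_spectrum (hA : A.PosSemidef) {x : ℝ} (hx : x ∈ spectrum ℝ A) :
    0 ≤ x := by
  rw [hA.1.spectrum_real_eq_range_eigenvalues] at hx
  obtain ⟨i, rfl⟩ := hx
  exact hA.eigenvalues_nonneg i

lemma IsHermitian.cfc_eq_mul_diagonal (hA : A.IsHermitian) (f : ℝ → ℝ) :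
    cfc f A = (hA.eigenvectorUnitary : Matrix n n ℝ) * diagonal (f ∘ hA.eigenvalues) *
      star (hA.eigenvectorUnitary : Matrix n n ℝ) := by
  rw [hA.cfc_eq, IsHermitian.cfc, Unitary.conjStarAlgAut_apply, RCLike.ofReal_real_eq_id,
    Function.id_comp]

lemma IsHermitian.trace_cfc_mul_cfc (hA : A.IsHermitian) (hB : B.IsHermitian) (f g : ℝ → ℝ) :
    (cfc f A * cfc g B).trace = ∑ i, ∑ j, f (hA.eigenvalues i) * g (hB.eigenvalues j) *
      ((star (hA.eigenvectorUnitary : Matrix n n ℝ) * hB.eigenvectorUnitary) i j) ^ 2 := by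
  set U := (hA.eigenvectorUnitary : Matrix n n ℝ)
  set W := (hB.eigenvectorUnitary : Matrix n n ℝ)
  set P := star U * W
  have hcycle : (U * diagonal (f ∘ hA.eigenvalues) * star U *
      (W * diagonal (g ∘ hB.eigenvalues) * star W)).trace =
      (diagonal (f ∘ hA.eigenvalues) * (P * diagonal (g ∘ hB.eigenvalues) * star P)).trace := by
    rw [show U * diagonal (f ∘ hA.eigenvalues) * star U *
        (W * diagonal (g ∘ hB.eigenvalues) * star W) =
        U * (diagonal (f ∘ hA.eigenvalues) * P * diagonal (g ∘ hB.eigenvalues) * star W) by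
      simp only [P, Matrix.mul_assoc], trace_mul_comm]
    simp only [P, star_mul, star_star, Matrix.mul_assoc]
  rw [hA.cfc_eq_mul_diagonal, hB.cfc_eq_mul_diagonal, hcycle, trace]
  refine Finset.sum_congr rfl fun i _ => ?_
  rw [diag_apply, diagonal_mul, mul_apply, Finset.mul_sum]
  simp only [mul_diagonal, star_apply, star_trivial, Function.comp_apply]
  exact Finset.sum_congr rfl fun j _ => by ring

lemma IsHermitian.dotProduct_cfc_mulVec (hA : A.IsHermitian) (f : ℝ → ℝ) (u : n → ℝ) :
    u ⬝ᵥ cfc f A *ᵥ u =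
      ∑ i, f (hA.eigenvalues i) * ((star (hA.eigenvectorUnitary : Matrix n n ℝ) *ᵥ u) i) ^ 2 := by
  rw [hA.cfc_eq_mul_diagonal, ← mulVec_mulVec, ← mulVec_mulVec, dotProduct_mulVec,
    ← mulVec_transpose, ← conjTranspose_eq_transpose_of_trivial, ← star_eq_conjTranspose]
  simp only [dotProduct, mulVec_diagonal, Function.comp_apply]
  exact Finset.sum_congr rfl fun i _ => by ring

lemma IsHermitian.trace_cfc_le_of_le_tangent (hA : A.IsHermitian) (hB : B.IsHermitian)
    {f g : ℝ → ℝ} (h : ∀ a ∈ spectrum ℝ A, ∀ b ∈ spectrum ℝ B, f b ≤ f a + g a * (b - a)) :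
    (cfc f B).trace ≤ (cfc f A).trace + (cfc g A * (B - A)).trace := by
  -- by `trace_cfc_mul_cfc` each of the four traces is a sum `∑ᵢⱼ φ(aᵢ, bⱼ) Pᵢⱼ²` with the same
  -- weights `Pᵢⱼ² = ((Uᴬ)ᵀ Uᴮ)ᵢⱼ²`, so `h` can be applied term by term
  have hfB : (cfc f B).trace = (cfc (fun _ : ℝ ↦ (1 : ℝ)) A * cfc f B).trace := by
    rw [cfc_const_one ℝ A hA.isSelfAdjoint, Matrix.one_mul]
  have hfA : (cfc f A).trace = (cfc f A * cfc (fun _ : ℝ ↦ (1 : ℝ)) B).trace := by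
    rw [cfc_const_one ℝ B hB.isSelfAdjoint, Matrix.mul_one]
  have hgB : cfc g A * B = cfc g A * cfc (id : ℝ → ℝ) B := by rw [cfc_id ℝ B hB.isSelfAdjoint]
  have hgA : cfc g A * A = cfc (fun x ↦ g x * x) A * cfc (fun _ : ℝ ↦ (1 : ℝ)) B := by
    rw [cfc_const_one ℝ B hB.isSelfAdjoint, Matrix.mul_one,
      cfc_mul g (fun x ↦ x) A (finite_real_spectrum.continuousOn _)
        (finite_real_spectrum.continuousOn _), cfc_id' ℝ A hA.isSelfAdjoint]
  rw [hfB, hfA, Matrix.mul_sub, trace_sub, hgB, hgA, hA.trace_cfc_mul_cfc hB,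
    hA.trace_cfc_mul_cfc hB, hA.trace_cfc_mul_cfc hB, hA.trace_cfc_mul_cfc hB,
    ← Finset.sum_sub_distrib, ← Finset.sum_add_distrib]
  refine Finset.sum_le_sum fun i _ ↦ ?_
  rw [← Finset.sum_sub_distrib, ← Finset.sum_add_distrib]
  refine Finset.sum_le_sum fun j _ ↦ ?_
  have hij := h _ (hA.eigenvalues_mem_spectrum_real i) _ (hB.eigenvalues_mem_spectrum_real j)
  have hP := sq_nonneg ((star (hA.eigenvectorUnitary : Matrix n n ℝ) *
    hB.eigenvectorUnitary) i j)
  simp only [id]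
  nlinarith [mul_le_mul_of_nonneg_right hij hP]

lemma PosSemidef.rpow_dotProduct_mulVec_le (hA : A.PosSemidef) {u : n → ℝ} (hu : u ⬝ᵥ u ≤ 1)
    {r : ℝ} (hr : 1 ≤ r) : (u ⬝ᵥ A *ᵥ u) ^ r ≤ u ⬝ᵥ cfc (fun x : ℝ ↦ x ^ r) A *ᵥ u := by
  set c := fun i ↦ ((star (hA.1.eigenvectorUnitary : Matrix n n ℝ) *ᵥ u) i) ^ 2
  have hquad (f : ℝ → ℝ) : u ⬝ᵥ cfc f A *ᵥ u = ∑ i, c i * f (hA.1.eigenvalues i) := by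
    rw [hA.1.dotProduct_cfc_mulVec]
    exact Finset.sum_congr rfl fun i _ ↦ mul_comm _ _
  have hmass : ∑ i, c i ≤ 1 := by
    have h1 := hquad fun _ ↦ 1
    rw [cfc_const_one ℝ A hA.1.isSelfAdjoint, one_mulVec] at h1
    simp only [mul_one] at h1
    exact h1 ▸ hu
  rw [hquad]
  conv_lhs => rw [← cfc_id' ℝ A hA.1.isSelfAdjoint, hquad]
  exact rpow_sum_mul_le_sum_mul_rpow _ (fun i ↦ sq_nonneg _) hA.eigenvalues_nonneg hmass hr

lemma PosDef.cfc_rpow_inv (hA : A.PosDef) (q : ℝ) :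
    cfc (fun x : ℝ ↦ x ^ q) A⁻¹ = cfc (fun x : ℝ ↦ x ^ (-q)) A := by
  rw [nonsing_inv_eq_ringInverse, ← cfc_ringInverse_id (R := ℝ) A hA.isUnit hA.1.isSelfAdjoint,
    ← cfc_comp (fun x : ℝ ↦ x ^ q) (·⁻¹) A hA.1.isSelfAdjoint
      ((finite_real_spectrum.image _).continuousOn _) (finite_real_spectrum.continuousOn _)]
  refine cfc_congr fun x hx ↦ ?_
  have hx0 := hA.pos_of_mem_spectrum hx
  simp only [Function.comp_apply, Real.inv_rpow hx0.le, Real.rpow_neg hx0.le]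

lemma PosDef.mul_cfc_rpow_mul (hA : A.PosDef) (q : ℝ) :
    A * cfc (fun x : ℝ ↦ x ^ q) A * A = cfc (fun x : ℝ ↦ x ^ (q + 2)) A := by
  have hcont (k : ℝ → ℝ) : ContinuousOn k (spectrum ℝ A) := finite_real_spectrum.continuousOn k
  calc A * cfc (fun x : ℝ ↦ x ^ q) A * A
      = cfc (fun x : ℝ ↦ x) A * cfc (fun x : ℝ ↦ x ^ q) A * cfc (fun x : ℝ ↦ x) A := by
        rw [cfc_id' ℝ A hA.1.isSelfAdjoint]
    _ = cfc (fun x : ℝ ↦ x * x ^ q * x) A := by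
        rw [← cfc_mul _ _ A (hcont _) (hcont _), ← cfc_mul _ _ A (hcont _) (hcont _)]
    _ = cfc (fun x : ℝ ↦ x ^ (q + 2)) A := cfc_congr fun x hx ↦ by
        rw [Real.rpow_add (hA.pos_of_mem_spectrum hx), Real.rpow_two]
        ring

lemma PosDef.mul_rpow_le_trace_cfc_rpow_sub (hA : A.PosDef) (hB : B.PosSemidef) {u : n → ℝ}
    (hu : u ⬝ᵥ u ≤ 1) {c : ℝ} (hc : 0 ≤ c) (hBA : B = A - c • vecMulVec (A *ᵥ u) (A *ᵥ u))
    {p : ℝ} (hp0 : 0 < p) (hp1 : p ≤ 1) :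
    c * p * (u ⬝ᵥ A *ᵥ u) ^ (p + 1) ≤
      (cfc (fun x : ℝ ↦ x ^ p) A).trace - (cfc (fun x : ℝ ↦ x ^ p) B).trace := by
  have hklein := hA.1.trace_cfc_le_of_le_tangent hB.1 (g := fun x ↦ p * x ^ (p - 1))
    fun a ha b hb ↦ rpow_le_rpow_add_mul_rpow_sub_one_mul_sub (hA.pos_of_mem_spectrum ha)
      (hB.nonneg_of_mem_spectrum hb) hp0.le hp1
  have hdir : (cfc (fun x ↦ p * x ^ (p - 1)) A * (B - A)).trace =
      -(c * p) * (u ⬝ᵥ cfc (fun x : ℝ ↦ x ^ (p + 1)) A *ᵥ u) := by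
    rw [hBA, sub_sub_cancel_left, cfc_const_mul p _ A (finite_real_spectrum.continuousOn _),
      Matrix.smul_mul, Matrix.mul_neg, Matrix.mul_smul, trace_smul, trace_neg, trace_smul,
      hA.1.trace_mul_vecMulVec_mulVec, hA.mul_cfc_rpow_mul, show p - 1 + 2 = p + 1 by ring,
      smul_eq_mul, smul_eq_mul]
    ring
  have hjensen := hA.posSemidef.rpow_dotProduct_mulVec_le hu (r := p + 1) (by linarith)
  nlinarith [mul_le_mul_of_nonneg_left hjensen (mul_nonneg hc hp0.le)]

end Matrix

lemma mpow_eq_cfc {d : ℕ} {A : Matrix (Fin d) (Fin d) ℝ} (hA : A.IsHermitian) (q : ℝ) :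
    mpow A q = cfc (fun x : ℝ ↦ x ^ q) A := by
  rw [mpow, dif_pos hA, hA.cfc_eq_mul_diagonal]
  rfl

lemma mnorm_rpow_two_mul {d : ℕ} {B : Matrix (Fin d) (Fin d) ℝ} {x : Fin d → ℝ}
    (hx : 0 ≤ x ⬝ᵥ B *ᵥ x) (p : ℝ) : mnorm B x ^ (2 * p) = (x ⬝ᵥ B *ᵥ x) ^ p := by
  rw [mnorm, Real.sqrt_eq_rpow, ← Real.rpow_mul hx, show 1 / 2 * (2 * p) = p by ring]

theorem Matrix.PosDef.mul_rpow_div_le_trace_mpow_neg_sub {d : ℕ} {M : Matrix (Fin d) (Fin d) ℝ}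
    (hM : M.PosDef) {u : Fin d → ℝ} (hu : u ⬝ᵥ u ≤ 1) {p : ℝ} (hp0 : 0 < p) (hp1 : p ≤ 1) :
    p * (u ⬝ᵥ M⁻¹ *ᵥ u) ^ (p + 1) / (1 + u ⬝ᵥ M⁻¹ *ᵥ u) ≤
      (mpow M (-p)).trace - (mpow (M + vecMulVec u u) (-p)).trace := by
  set x := u ⬝ᵥ M⁻¹ *ᵥ u
  have hx : 0 < 1 + x := by
    linarith [show 0 ≤ x by simpa using hM.inv.posSemidef.dotProduct_mulVec_nonneg u]
  have hN : (M + vecMulVec u u).PosDef := by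
    simpa using hM.add_posSemidef (posSemidef_vecMulVec_self_star u)
  have hMu : u ᵥ* M⁻¹ = M⁻¹ *ᵥ u := by
    rw [← mulVec_transpose, ← conjTranspose_eq_transpose_of_trivial, hM.inv.1.eq]
  have hinv : (M + vecMulVec u u)⁻¹ = M⁻¹ - (1 + x)⁻¹ • vecMulVec (M⁻¹ *ᵥ u) (M⁻¹ *ᵥ u) := by
    rw [inv_add_vecMulVec hM.det_pos.ne'.isUnit u u hx.ne', hMu]
  have hdrop := hM.inv.mul_rpow_le_trace_cfc_rpow_sub hN.inv.posSemidef hu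
    (inv_nonneg.2 hx.le) hinv hp0 hp1
  rw [hM.cfc_rpow_inv, hN.cfc_rpow_inv, ← mpow_eq_cfc hM.1, ← mpow_eq_cfc hN.1] at hdrop
  calc p * x ^ (p + 1) / (1 + x) = (1 + x)⁻¹ * p * x ^ (p + 1) := by ring
    _ ≤ _ := hdrop

/-- Generalized elliptical potential lemma. -/
theorem generalized_elliptical_potential {d T : ℕ}
    (V : ℕ → Matrix (Fin d) (Fin d) ℝ) (u : ℕ → Fin d → ℝ)
    (hV0 : (V 0).PosDef)
    (hu : ∀ t < T, Real.sqrt (u t ⬝ᵥ u t) ≤ 1)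
    (hrec : ∀ t, V (t + 1) = V t + vecMulVec (u t) (u t))
    (p : ℝ) (hp0 : 0 < p) (hp1 : p ≤ 1) :
    ∑ t ∈ Finset.range T, mnorm (V t)⁻¹ (u t) ^ (2 * p) ≤
      2 ^ p * (T : ℝ) ^ (1 - p) * Real.log ((V T).det / (V 0).det) ^ p +
        3 / (2 * p) * ((mpow (V 0) (-p)).trace - (mpow (V T) (-p)).trace) := by
  have hV (t : ℕ) : (V t).PosDef := by
    induction t with
    | zero => exact hV0
    | succ t ih => simpa [hrec t] using ih.add_posSemidef (posSemidef_vecMulVec_self_star (u t))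
  set x := fun t ↦ u t ⬝ᵥ (V t)⁻¹ *ᵥ u t
  have hx (t : ℕ) : 0 ≤ x t := by simpa using (hV t).inv.posSemidef.dotProduct_mulVec_nonneg (u t)
  have hlog : Real.log ((V T).det / (V 0).det) = ∑ t ∈ Finset.range T, Real.log (1 + x t) := by
    rw [Real.log_div (hV T).det_pos.ne' (hV 0).det_pos.ne',
      ← Finset.sum_range_sub fun t ↦ Real.log (V t).det]
    refine Finset.sum_congr rfl fun t _ ↦ ?_
    rw [hrec, det_add_vecMulVec (hV t).det_pos.ne'.isUnit,
      Real.log_mul (hV t).det_pos.ne' (by linarith [hx t]), add_sub_cancel_left]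
  have hdrop (t : ℕ) (ht : t < T) : p * x t ^ (p + 1) / (1 + x t) ≤
      (mpow (V t) (-p)).trace - (mpow (V (t + 1)) (-p)).trace := by
    rw [hrec]
    exact (hV t).mul_rpow_div_le_trace_mpow_neg_sub
      (by simpa using Real.sqrt_le_one.1 (hu t ht)) hp0 hp1
  rw [Finset.sum_congr rfl fun t _ ↦ mnorm_rpow_two_mul (hx t) p, hlog]
  exact sum_rpow_le_of_potential_drop hx hp0 hp1 hdrop
end

section
/- Let V be a d×d real symmetric positive definite matrix, u ∈ ℝᵈ, and p ∈ (0, 1]. Then tr(V^{−p}) − tr((V + u uᵀ)^{−p}) ≥ p · (uᵀ V^{−1−p} u) / (1 + uᵀ V⁻¹ u). -/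
/-!
Write `V_t = V + t • u uᵀ` and `f t = tr (V_t ^ (-p))`. Klein's inequality for the convex function
`x ↦ x ^ (-p)` gives `f s - f t ≥ p (t - s) uᵀ V_t ^ (-p-1) u` for `s ≤ t`. By Sherman–Morrison,
`V_t⁻¹ u = V⁻¹ u / (1 + t uᵀ V⁻¹ u)`, so writing
`uᵀ V_t ^ (-p-1) u = (V_t⁻¹ u)ᵀ V_t ^ (1-p) (V_t⁻¹ u)` and using the Löwner–Heinz inequality
`V_t ^ (1-p) ≥ V ^ (1-p)` bounds it below by `uᵀ V ^ (-1-p) u / (1 + t uᵀ V⁻¹ u) ^ 2`.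
Integrating this bound over `t ∈ [0, 1]` gives the claim.
-/

open Matrix

lemma Unitary.conj_mul_conj {R : Type*} [Monoid R] [StarMul R] (U : unitary R) (a b : R) :
    U * a * star (U : R) * (U * b * star (U : R)) = U * (a * b) * star (U : R) := by
  simp only [mul_assoc]
  rw [← mul_assoc (star (U : R)), Unitary.coe_star_mul_self, one_mul]

section Conjugation

variable {n : Type*} [Fintype n]

lemma dotProduct_mul_mul_star_mulVec (U D : Matrix n n ℝ) (x : n → ℝ) :
    x ⬝ᵥ (U * D * star U) *ᵥ x = (star U *ᵥ x) ⬝ᵥ D *ᵥ (star U *ᵥ x) := by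
  rw [← mulVec_mulVec, ← mulVec_mulVec, dotProduct_mulVec x U, star_eq_conjTranspose,
    conjTranspose_eq_transpose_of_trivial, mulVec_transpose]

lemma Matrix.IsHermitian.dotProduct_mulVec_comm {H : Matrix n n ℝ} (hH : H.IsHermitian)
    (x y : n → ℝ) : x ⬝ᵥ H *ᵥ y = (H *ᵥ x) ⬝ᵥ y := by
  rw [dotProduct_mulVec, ← mulVec_transpose, ← conjTranspose_eq_transpose_of_trivial, hH.eq]

variable [DecidableEq n]

lemma dotProduct_diagonal_mulVec (f z : n → ℝ) :
    z ⬝ᵥ diagonal f *ᵥ z = ∑ i, f i * z i ^ 2 :=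
  Finset.sum_congr rfl fun i _ => by rw [mulVec_diagonal]; ring

lemma trace_diagonal_mul_mul_diagonal_mul_star (a b : n → ℝ) (Q : Matrix n n ℝ) :
    (diagonal a * Q * diagonal b * star Q).trace = ∑ i, ∑ j, a i * b j * Q i j ^ 2 := by
  refine Finset.sum_congr rfl fun i _ => Finset.sum_congr rfl fun j _ => ?_
  simp only [mul_diagonal, diagonal_mul, star_apply, star_trivial]
  ring

end Conjugation

section SpectralCalculus

variable {d : ℕ} {A B : Matrix (Fin d) (Fin d) ℝ}

lemma mpow_of_isHermitian (hA : A.IsHermitian) (q : ℝ) :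
    mpow A q = (hA.eigenvectorUnitary : Matrix (Fin d) (Fin d) ℝ) *
      diagonal (fun i => hA.eigenvalues i ^ q) *
      star (hA.eigenvectorUnitary : Matrix (Fin d) (Fin d) ℝ) :=
  dif_pos hA

lemma dotProduct_mpow_mulVec (hA : A.IsHermitian) (q : ℝ) (x : Fin d → ℝ) :
    x ⬝ᵥ mpow A q *ᵥ x = ∑ i, hA.eigenvalues i ^ q *
      (star (hA.eigenvectorUnitary : Matrix (Fin d) (Fin d) ℝ) *ᵥ x) i ^ 2 := by
  rw [mpow_of_isHermitian hA, dotProduct_mul_mul_star_mulVec, dotProduct_diagonal_mulVec]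

lemma dotProduct_mpow_mulVec_nonneg (hA : A.PosDef) (q : ℝ) (x : Fin d → ℝ) :
    0 ≤ x ⬝ᵥ mpow A q *ᵥ x := by
  rw [dotProduct_mpow_mulVec hA.1]
  exact Finset.sum_nonneg fun i _ =>
    mul_nonneg (Real.rpow_nonneg (hA.eigenvalues_pos i).le _) (sq_nonneg _)

lemma mpow_one (hA : A.IsHermitian) : mpow A 1 = A := by
  simpa [mpow_of_isHermitian hA] using hA.spectral_theorem.symm

lemma mpow_zero (hA : A.IsHermitian) : mpow A 0 = 1 := by
  simp [mpow_of_isHermitian hA]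

lemma mpow_mul_mpow (hA : A.PosDef) (q r : ℝ) : mpow A q * mpow A r = mpow A (q + r) := by
  simp only [mpow_of_isHermitian hA.1, Unitary.conj_mul_conj, diagonal_mul_diagonal,
    ← Real.rpow_add (hA.eigenvalues_pos _)]

lemma mpow_neg_one (hA : A.PosDef) : mpow A (-1) = A⁻¹ := by
  refine (inv_eq_right_inv ?_).symm
  nth_rewrite 1 [← mpow_one hA.1]
  rw [mpow_mul_mpow hA, add_neg_cancel, mpow_zero hA.1]

lemma dotProduct_mpow_sub_two_mulVec (hA : A.PosDef) (q : ℝ) (u : Fin d → ℝ) :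
    u ⬝ᵥ mpow A (q - 2) *ᵥ u = (A⁻¹ *ᵥ u) ⬝ᵥ mpow A q *ᵥ (A⁻¹ *ᵥ u) := by
  rw [show q - 2 = -1 + (q + -1) by ring, ← mpow_mul_mpow hA, ← mpow_mul_mpow hA,
    mpow_neg_one hA, ← mulVec_mulVec, ← mulVec_mulVec, hA.inv.1.dotProduct_mulVec_comm]

lemma trace_mpow_mul_mpow (hA : A.IsHermitian) (hB : B.IsHermitian) (a b : ℝ) :
    (mpow A a * mpow B b).trace = ∑ i, ∑ j, hA.eigenvalues i ^ a * hB.eigenvalues j ^ b *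
      (star (hA.eigenvectorUnitary : Matrix (Fin d) (Fin d) ℝ) *
        (hB.eigenvectorUnitary : Matrix (Fin d) (Fin d) ℝ)) i j ^ 2 := by
  rw [← trace_diagonal_mul_mul_diagonal_mul_star, mpow_of_isHermitian hA, mpow_of_isHermitian hB,
    star_mul, star_star]
  simp only [mul_assoc]
  rw [trace_mul_comm]
  simp only [mul_assoc]

end SpectralCalculus

lemma one_sub_mul_sub_one_le_rpow_neg {x p : ℝ} (hx : 0 < x) (hp : 0 ≤ p) :
    1 - p * (x - 1) ≤ x ^ (-p) := by
  have hlog : p * Real.log x ≤ p * (x - 1) :=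
    mul_le_mul_of_nonneg_left (Real.log_le_sub_one_of_pos hx) hp
  rw [Real.rpow_def_of_pos hx]
  linarith [Real.add_one_le_exp (Real.log x * -p)]

lemma rpow_neg_tangent_le {l μ p : ℝ} (hl : 0 < l) (hμ : 0 < μ) (hp : 0 ≤ p) :
    p * (μ ^ (-p) - l * μ ^ (-p - 1)) ≤ l ^ (-p) - μ ^ (-p) := by
  have hx := one_sub_mul_sub_one_le_rpow_neg (div_pos hl hμ) hp
  have hl_eq : l ^ (-p) = (l / μ) ^ (-p) * μ ^ (-p) := by
    rw [← Real.mul_rpow (div_pos hl hμ).le hμ.le, div_mul_cancel₀ _ hμ.ne']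
  have hμ_eq : l * μ ^ (-p - 1) = l / μ * μ ^ (-p) := by
    rw [Real.rpow_sub_one hμ.ne']; ring
  rw [hl_eq, hμ_eq]
  nlinarith [Real.rpow_pos_of_pos hμ (-p)]

variable {d : ℕ} {A B : Matrix (Fin d) (Fin d) ℝ} in
/-- Klein's inequality for the convex function `x ↦ x ^ (-p)`. -/
lemma mul_trace_sub_mul_mpow_le (hA : A.PosDef) (hB : B.PosDef) {p : ℝ} (hp : 0 ≤ p) :
    p * ((B - A) * mpow B (-p - 1)).trace ≤ (mpow A (-p)).trace - (mpow B (-p)).trace := by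
  have hA_tr : (mpow A (-p)).trace = (mpow A (-p) * mpow B 0).trace := by
    rw [mpow_zero hB.1, mul_one]
  have hB_tr : (mpow B (-p)).trace = (mpow A 0 * mpow B (-p)).trace := by
    rw [mpow_zero hA.1, one_mul]
  have hBA_tr : ((B - A) * mpow B (-p - 1)).trace =
      (mpow A 0 * mpow B (-p)).trace - (mpow A 1 * mpow B (-p - 1)).trace := by
    nth_rewrite 1 [← mpow_one hB.1]
    rw [sub_mul, trace_sub, mpow_mul_mpow hB, mpow_zero hA.1, one_mul, mpow_one hA.1,
      show (1 : ℝ) + (-p - 1) = -p by ring]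
  rw [hA_tr, hB_tr, hBA_tr]
  simp only [trace_mpow_mul_mpow hA.1 hB.1, ← Finset.sum_sub_distrib, Finset.mul_sum]
  gcongr with i _ j _
  have := mul_le_mul_of_nonneg_left
    (rpow_neg_tangent_le (hA.eigenvalues_pos i) (hB.eigenvalues_pos j) hp)
    (sq_nonneg ((star (hA.1.eigenvectorUnitary : Matrix (Fin d) (Fin d) ℝ) *
      (hB.1.eigenvectorUnitary : Matrix (Fin d) (Fin d) ℝ)) i j))
  simp only [Real.rpow_zero, Real.rpow_one]
  linarith

section Resolvent

variable {n : Type*} [Fintype n] [DecidableEq n]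

lemma dotProduct_inv_mulVec_le_of_posSemidef_sub {X Y : Matrix n n ℝ} (hX : X.PosDef)
    (hY : Y.PosDef) (hXY : (X - Y).PosSemidef) (w : n → ℝ) :
    w ⬝ᵥ X⁻¹ *ᵥ w ≤ w ⬝ᵥ Y⁻¹ *ᵥ w := by
  set x := X⁻¹ *ᵥ w
  set y := Y⁻¹ *ᵥ w
  have hXx : X *ᵥ x = w := by
    rw [mulVec_mulVec, mul_nonsing_inv _ ((isUnit_iff_isUnit_det X).mp hX.isUnit), one_mulVec]
  have hYy : Y *ᵥ y = w := by
    rw [mulVec_mulVec, mul_nonsing_inv _ ((isUnit_iff_isUnit_det Y).mp hY.isUnit), one_mulVec]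
  -- `0 ≤ (x - y)ᵀ Y (x - y) ≤ xᵀ X x - 2 xᵀ w + yᵀ w = yᵀ w - xᵀ w`
  have hY_nonneg := hY.posSemidef.dotProduct_mulVec_nonneg (x - y)
  have hXY_nonneg := hXY.dotProduct_mulVec_nonneg x
  simp only [star_trivial, sub_mulVec, mulVec_sub, dotProduct_sub, sub_dotProduct,
    hXx, hYy] at hY_nonneg hXY_nonneg
  rw [hY.1.dotProduct_mulVec_comm y x, hYy] at hY_nonneg
  rw [dotProduct_comm w x, dotProduct_comm w y]
  linarith [dotProduct_comm x w, dotProduct_comm y w]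

end Resolvent

section LoewnerHeinz

open Set MeasureTheory Real

variable {d : ℕ} {A B : Matrix (Fin d) (Fin d) ℝ}

lemma add_smul_one_eq_of_isHermitian (hA : A.IsHermitian) (t : ℝ) :
    A + t • 1 = (hA.eigenvectorUnitary : Matrix (Fin d) (Fin d) ℝ) *
      Matrix.diagonal (fun i => hA.eigenvalues i + t) *
      star (hA.eigenvectorUnitary : Matrix (Fin d) (Fin d) ℝ) := by
  have hdiag : Matrix.diagonal (fun i => hA.eigenvalues i + t) =
      Matrix.diagonal (fun i => hA.eigenvalues i ^ (1 : ℝ)) +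
        t • Matrix.diagonal (fun i => hA.eigenvalues i ^ (0 : ℝ)) := by
    ext i j
    by_cases h : i = j <;> simp [h]
  nth_rewrite 1 [← mpow_one hA, ← mpow_zero hA]
  rw [hdiag, mul_add, add_mul, Matrix.mul_smul, Matrix.smul_mul, mpow_of_isHermitian hA,
    mpow_of_isHermitian hA]

lemma inv_add_smul_one_eq_of_posDef (hA : A.PosDef) {t : ℝ} (ht : 0 ≤ t) :
    (A + t • 1)⁻¹ = (hA.1.eigenvectorUnitary : Matrix (Fin d) (Fin d) ℝ) *
      Matrix.diagonal (fun i => (hA.1.eigenvalues i + t)⁻¹) *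
      star (hA.1.eigenvectorUnitary : Matrix (Fin d) (Fin d) ℝ) := by
  refine Matrix.inv_eq_right_inv ?_
  have hne : ∀ i, hA.1.eigenvalues i + t ≠ 0 := fun i =>
    (add_pos_of_pos_of_nonneg (hA.eigenvalues_pos i) ht).ne'
  rw [add_smul_one_eq_of_isHermitian hA.1, Unitary.conj_mul_conj, Matrix.diagonal_mul_diagonal]
  simp [mul_inv_cancel₀ (hne _)]

lemma dotProduct_inv_add_smul_one_mulVec (hA : A.PosDef) {t : ℝ} (ht : 0 ≤ t) (w : Fin d → ℝ) :
    w ⬝ᵥ (A + t • 1)⁻¹ *ᵥ w = ∑ i, (hA.1.eigenvalues i + t)⁻¹ *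
      (star (hA.1.eigenvectorUnitary : Matrix (Fin d) (Fin d) ℝ) *ᵥ w) i ^ 2 := by
  rw [inv_add_smul_one_eq_of_posDef hA ht, dotProduct_mul_mul_star_mulVec,
    dotProduct_diagonal_mulVec]

lemma sum_sq_star_eigenvectorUnitary_mulVec (hA : A.IsHermitian) (w : Fin d → ℝ) :
    ∑ i, (star (hA.eigenvectorUnitary : Matrix (Fin d) (Fin d) ℝ) *ᵥ w) i ^ 2 = w ⬝ᵥ w := by
  simpa [mpow_zero hA] using (dotProduct_mpow_mulVec hA 0 w).symm

/-- `w ⬝ᵥ f(A) *ᵥ w` for `f = rpowIntegrand₀₁ r t`, written through the resolvent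
`(A + t • 1)⁻¹`. -/
noncomputable def quadRpowIntegrand₀₁ (r t : ℝ) (A : Matrix (Fin d) (Fin d) ℝ) (w : Fin d → ℝ) :
    ℝ :=
  t ^ r * (t⁻¹ * (w ⬝ᵥ w) - w ⬝ᵥ (A + t • 1)⁻¹ *ᵥ w)

lemma quadRpowIntegrand₀₁_eq_sum (hA : A.PosDef) (r : ℝ) (w : Fin d → ℝ) {t : ℝ} (ht : 0 < t) :
    quadRpowIntegrand₀₁ r t A w =
      ∑ i, (star (hA.1.eigenvectorUnitary : Matrix (Fin d) (Fin d) ℝ) *ᵥ w) i ^ 2 *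
        rpowIntegrand₀₁ r t (hA.1.eigenvalues i) := by
  rw [quadRpowIntegrand₀₁, dotProduct_inv_add_smul_one_mulVec hA ht.le,
    ← sum_sq_star_eigenvectorUnitary_mulVec hA.1, Finset.mul_sum, ← Finset.sum_sub_distrib,
    Finset.mul_sum]
  refine Finset.sum_congr rfl fun i _ => ?_
  rw [rpowIntegrand₀₁, add_comm t]
  ring

lemma integrableOn_quadRpowIntegrand₀₁ (hA : A.PosDef) {r : ℝ} (hr : r ∈ Ioo 0 1)
    (w : Fin d → ℝ) : IntegrableOn (fun t => quadRpowIntegrand₀₁ r t A w) (Ioi 0) :=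
  IntegrableOn.congr_fun
    (integrable_finsetSum _ fun i _ =>
      (integrableOn_rpowIntegrand₀₁_Ioi hr (hA.eigenvalues_pos i).le).const_mul _)
    (fun _ ht => (quadRpowIntegrand₀₁_eq_sum hA r w ht).symm) measurableSet_Ioi

lemma integral_quadRpowIntegrand₀₁ (hA : A.PosDef) {r : ℝ} (hr : r ∈ Ioo 0 1) (w : Fin d → ℝ) :
    ∫ t in Ioi 0, quadRpowIntegrand₀₁ r t A w =
      (∫ t in Ioi 0, rpowIntegrand₀₁ r t 1) * (w ⬝ᵥ mpow A r *ᵥ w) := by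
  rw [setIntegral_congr_fun measurableSet_Ioi fun _ ht => quadRpowIntegrand₀₁_eq_sum hA r w ht,
    integral_finsetSum _ fun i _ =>
      (integrableOn_rpowIntegrand₀₁_Ioi hr (hA.eigenvalues_pos i).le).const_mul _,
    dotProduct_mpow_mulVec hA.1, Finset.mul_sum]
  refine Finset.sum_congr rfl fun i _ => ?_
  rw [integral_const_mul, integral_rpowIntegrand₀₁_eq_rpow_mul_const hr (hA.eigenvalues_pos i).le]
  ring

/-- The Löwner–Heinz inequality. -/
lemma dotProduct_mpow_mulVec_le_of_posSemidef_sub (hA : A.PosDef) (hB : B.PosDef)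
    (hAB : (A - B).PosSemidef) {r : ℝ} (hr0 : 0 ≤ r) (hr1 : r < 1) (w : Fin d → ℝ) :
    w ⬝ᵥ mpow B r *ᵥ w ≤ w ⬝ᵥ mpow A r *ᵥ w := by
  rcases hr0.eq_or_lt with rfl | hr0
  · simp [mpow_zero hA.1, mpow_zero hB.1]
  have hr : r ∈ Ioo 0 1 := ⟨hr0, hr1⟩
  refine le_of_mul_le_mul_left ?_ (integral_rpowIntegrand₀₁_one_pos hr)
  rw [← integral_quadRpowIntegrand₀₁ hB hr, ← integral_quadRpowIntegrand₀₁ hA hr]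
  refine setIntegral_mono_on (integrableOn_quadRpowIntegrand₀₁ hB hr w)
    (integrableOn_quadRpowIntegrand₀₁ hA hr w) measurableSet_Ioi fun t (ht : 0 < t) => ?_
  have hres : w ⬝ᵥ (A + t • 1)⁻¹ *ᵥ w ≤ w ⬝ᵥ (B + t • 1)⁻¹ *ᵥ w :=
    dotProduct_inv_mulVec_le_of_posSemidef_sub
      (hA.add_posSemidef (PosSemidef.one.smul ht.le))
      (hB.add_posSemidef (PosSemidef.one.smul ht.le))
      (by rwa [add_sub_add_right_eq_sub]) w
  unfold quadRpowIntegrand₀₁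
  gcongr

end LoewnerHeinz

section RankOne

variable {n : Type*} [Fintype n]

lemma posSemidef_smul_vecMulVec_self {s : ℝ} (hs : 0 ≤ s) (u : n → ℝ) :
    (s • vecMulVec u u).PosSemidef := by
  simpa using (posSemidef_vecMulVec_self_star u).smul hs

lemma trace_vecMulVec_self_mul (u : n → ℝ) (C : Matrix n n ℝ) :
    (vecMulVec u u * C).trace = u ⬝ᵥ C *ᵥ u := by
  rw [vecMulVec_mul, trace_vecMulVec, dotProduct_mulVec, dotProduct_comm]

variable [DecidableEq n]

/-- Sherman–Morrison, applied to `u`. -/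
lemma smul_inv_add_smul_vecMulVec_mulVec {V : Matrix n n ℝ} (hV : IsUnit V.det) (u : n → ℝ)
    (s : ℝ) (hW : IsUnit (V + s • vecMulVec u u).det) :
    (1 + s * (u ⬝ᵥ V⁻¹ *ᵥ u)) • ((V + s • vecMulVec u u)⁻¹ *ᵥ u) = V⁻¹ *ᵥ u := by
  set W := V + s • vecMulVec u u
  have hWz : W *ᵥ (V⁻¹ *ᵥ u) = (1 + s * (u ⬝ᵥ V⁻¹ *ᵥ u)) • u := by
    rw [add_mulVec, smul_mulVec, vecMulVec_mulVec, mulVec_mulVec, mul_nonsing_inv _ hV,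
      one_mulVec, op_smul_eq_smul, smul_smul, add_smul, one_smul]
  rw [← mulVec_smul, ← hWz, mulVec_mulVec, nonsing_inv_mul _ hW, one_mulVec]

end RankOne

variable {d : ℕ} in
lemma mul_sub_mul_dotProduct_mpow_div_le_trace_sub {V : Matrix (Fin d) (Fin d) ℝ}
    (hV : V.PosDef) (u : Fin d → ℝ) {p : ℝ} (hp0 : 0 < p) (hp1 : p ≤ 1) {s t : ℝ} (hs : 0 ≤ s)
    (hst : s ≤ t) :
    p * (t - s) * (u ⬝ᵥ mpow V (-1 - p) *ᵥ u) / (1 + t * (u ⬝ᵥ V⁻¹ *ᵥ u)) ^ 2 ≤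
      (mpow (V + s • vecMulVec u u) (-p)).trace - (mpow (V + t • vecMulVec u u) (-p)).trace := by
  set b := u ⬝ᵥ V⁻¹ *ᵥ u
  have hb : 0 ≤ b := by simpa using hV.inv.posSemidef.dotProduct_mulVec_nonneg u
  have hbt : 0 < 1 + t * b := by nlinarith
  have hVs : (V + s • vecMulVec u u).PosDef :=
    hV.add_posSemidef (posSemidef_smul_vecMulVec_self hs u)
  have hVt : (V + t • vecMulVec u u).PosDef :=
    hV.add_posSemidef (posSemidef_smul_vecMulVec_self (hs.trans hst) u)
  have hklein := mul_trace_sub_mul_mpow_le hVs hVt hp0.le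
  rw [add_sub_add_left_eq_sub, ← sub_smul, smul_mul, trace_smul, trace_vecMulVec_self_mul,
    smul_eq_mul] at hklein
  have hVt_inv : (V + t • vecMulVec u u)⁻¹ *ᵥ u = (1 + t * b)⁻¹ • (V⁻¹ *ᵥ u) := by
    rw [← smul_inv_add_smul_vecMulVec_mulVec ((isUnit_iff_isUnit_det _).mp hV.isUnit) u t
      ((isUnit_iff_isUnit_det _).mp hVt.isUnit), inv_smul_smul₀ hbt.ne']
  have hquad : u ⬝ᵥ mpow V (-1 - p) *ᵥ u / (1 + t * b) ^ 2 ≤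
      u ⬝ᵥ mpow (V + t • vecMulVec u u) (-p - 1) *ᵥ u := by
    rw [show -1 - p = (1 - p) - 2 by ring, show -p - 1 = (1 - p) - 2 by ring,
      dotProduct_mpow_sub_two_mulVec hV, dotProduct_mpow_sub_two_mulVec hVt, hVt_inv,
      mulVec_smul, smul_dotProduct, dotProduct_smul, smul_eq_mul, smul_eq_mul, div_eq_inv_mul,
      ← mul_assoc, ← sq, inv_pow]
    gcongr
    exact dotProduct_mpow_mulVec_le_of_posSemidef_sub hVt hV
      (by simpa using posSemidef_smul_vecMulVec_self (hs.trans hst) u) (by linarith)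
      (by linarith) _
  calc p * (t - s) * (u ⬝ᵥ mpow V (-1 - p) *ᵥ u) / (1 + t * b) ^ 2
      = p * (t - s) * (u ⬝ᵥ mpow V (-1 - p) *ᵥ u / (1 + t * b) ^ 2) := by ring
    _ ≤ p * (t - s) * (u ⬝ᵥ mpow (V + t • vecMulVec u u) (-p - 1) *ᵥ u) := by gcongr
    _ ≤ _ := by linarith

open Filter Topology in
/-- Integration of an increment bound with relative error `O(t - s)`: sum over `n` equal steps
and let `n → ∞`. -/
lemma sub_le_sub_of_forall_mul_sub_le {f g : ℝ → ℝ} (c : ℝ)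
    (h : ∀ s t, 0 ≤ s → s ≤ t → t ≤ 1 → (1 - c * (t - s)) * (g s - g t) ≤ f s - f t) :
    g 0 - g 1 ≤ f 0 - f 1 := by
  have hstep : ∀ n : ℕ, 0 < n → (1 - c / n) * (g 0 - g 1) ≤ f 0 - f 1 := by
    intro n hn
    have hn' : (0 : ℝ) < n := by exact_mod_cast hn
    have hsum := Finset.sum_le_sum fun k (hk : k ∈ Finset.range n) =>
      h (k / n) ((k + 1 : ℕ) / n) (by positivity) (by gcongr; simp)
        ((div_le_one hn').2 (by exact_mod_cast Finset.mem_range.mp hk))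
    have hlen : ∀ k : ℕ, ((k + 1 : ℕ) : ℝ) / n - k / n = 1 / n := fun k => by push_cast; ring
    simp only [hlen, ← Finset.mul_sum] at hsum
    rw [Finset.sum_range_sub' (fun k : ℕ => g (k / n)),
      Finset.sum_range_sub' (fun k : ℕ => f (k / n))] at hsum
    simpa [div_self hn'.ne', div_eq_mul_inv] using hsum
  have hlim : Tendsto (fun n : ℕ => (1 - c / n) * (g 0 - g 1)) atTop (𝓝 (g 0 - g 1)) := by
    simpa using ((tendsto_const_div_atTop_nhds_zero_nat c).const_sub 1).mul_const (g 0 - g 1)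
  exact le_of_tendsto hlim (eventually_atTop.2 ⟨1, fun n hn => hstep n hn⟩)

lemma one_sub_mul_sub_mul_div_sub_div_le {b s t : ℝ} (hb : 0 ≤ b) (hs : 0 ≤ s) (hst : s ≤ t) :
    (1 - b * (t - s)) * (t / (1 + t * b) - s / (1 + s * b)) ≤ (t - s) / (1 + t * b) ^ 2 := by
  have hsb : 0 < 1 + s * b := by positivity
  have htb : 0 < 1 + t * b := by nlinarith
  rw [div_sub_div _ _ htb.ne' hsb.ne', mul_div_assoc', div_le_div_iff₀ (by positivity)
    (by positivity)]
  have ht : 0 ≤ t := hs.trans hst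
  have hts : 0 ≤ t - s := sub_nonneg.2 hst
  nlinarith [mul_nonneg (mul_nonneg (mul_nonneg hts hts) (mul_nonneg hb hb))
    (mul_nonneg ht htb.le), mul_nonneg (mul_nonneg hts hts) (mul_nonneg hb hb)]

/-- Trace-difference lower bound (equation (14) in the proof of the
generalized elliptical potential lemma). -/
theorem trace_difference_lower_bound {d : ℕ} (V : Matrix (Fin d) (Fin d) ℝ) (hV : V.PosDef)
    (u : Fin d → ℝ) (p : ℝ) (hp0 : 0 < p) (hp1 : p ≤ 1) :
    p * (u ⬝ᵥ mpow V (-1 - p) *ᵥ u / (1 + u ⬝ᵥ V⁻¹ *ᵥ u)) ≤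
      (mpow V (-p)).trace - (mpow (V + vecMulVec u u) (-p)).trace := by
  set b := u ⬝ᵥ V⁻¹ *ᵥ u
  set K := u ⬝ᵥ mpow V (-1 - p) *ᵥ u
  have hb : 0 ≤ b := by simpa using hV.inv.posSemidef.dotProduct_mulVec_nonneg u
  have hpK : 0 ≤ p * K := mul_nonneg hp0.le (dotProduct_mpow_mulVec_nonneg hV _ u)
  -- `t ↦ -p K t / (1 + t b)` is an antiderivative of the bound `p K / (1 + t b) ^ 2`
  have key := sub_le_sub_of_forall_mul_sub_le
    (f := fun t => (mpow (V + t • vecMulVec u u) (-p)).trace)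
    (g := fun t => -(p * K) * (t / (1 + t * b))) b fun s t hs hst _ =>
    calc (1 - b * (t - s)) * (-(p * K) * (s / (1 + s * b)) - -(p * K) * (t / (1 + t * b)))
        = p * K * ((1 - b * (t - s)) * (t / (1 + t * b) - s / (1 + s * b))) := by ring
      _ ≤ p * K * ((t - s) / (1 + t * b) ^ 2) :=
        mul_le_mul_of_nonneg_left (one_sub_mul_sub_mul_div_sub_div_le hb hs hst) hpK
      _ = p * (t - s) * K / (1 + t * b) ^ 2 := by ring
      _ ≤ _ := mul_sub_mul_dotProduct_mpow_div_le_trace_sub hV u hp0 hp1 hs hst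
  convert key using 1
  · simp only [zero_div, mul_zero, one_mul]; ring
  · simp
end

section
/- Let λ₁, …, λ_d > 0, let V₀ = diag(λ₁, …, λ_d), let u_t = e_{t+1} be the (t+1)-st standard basis vector of ℝᵈ for t ∈ {0, …, d−1}, and define V_{t+1} = V_t + u_t u_tᵀ. Then for every p ∈ (0, 1], ∑_{t=0}^{d−1} ‖u_t‖_{V_t⁻¹}^{2p} = ∑_{i=1}^{d} λ_i^{−p} = tr(V₀^{−p}). -/
open Matrix

open Polynomial in
lemma burnin_charpoly_conj {d : ℕ} (U : Matrix.unitaryGroup (Fin d) ℝ)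
    (A : Matrix (Fin d) (Fin d) ℝ) :
    ((U : Matrix (Fin d) (Fin d) ℝ) * A * star (U : Matrix (Fin d) (Fin d) ℝ)).charpoly
      = A.charpoly := by
  set Uc : Matrix (Fin d) (Fin d) ℝ := (U : Matrix (Fin d) (Fin d) ℝ) with hUc
  have hUU : Uc * star Uc = 1 := (Unitary.mem_iff.mp U.2).2
  have key : ∀ M : Matrix (Fin d) (Fin d) ℝ,
      charmatrix M = (X : ℝ[X]) • (1 : Matrix (Fin d) (Fin d) ℝ[X]) - M.map C := by
    intro M
    ext i j
    by_cases h : i = j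
    · subst h
      simp [Matrix.charmatrix_apply_eq, Matrix.one_apply]
    · simp [Matrix.charmatrix_apply_ne _ _ _ h, Matrix.one_apply_ne h]
  have hmap1 : (1 : Matrix (Fin d) (Fin d) ℝ).map C = 1 :=
    Matrix.map_one _ (map_zero C) (map_one C)
  have hch : charmatrix (Uc * A * star Uc)
      = Uc.map C * charmatrix A * (star Uc).map C := by
    rw [key, key, Matrix.mul_sub, Matrix.sub_mul]
    congr 1
    · rw [Matrix.mul_smul, Matrix.mul_one, Matrix.smul_mul, ← Matrix.map_mul, hUU, hmap1]
    · rw [← Matrix.map_mul, ← Matrix.map_mul]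
  have hdet : (Uc.map C).det * ((star Uc).map C).det = 1 := by
    rw [← Matrix.det_mul, ← Matrix.map_mul, hUU, hmap1, Matrix.det_one]
  rw [Matrix.charpoly, Matrix.charpoly, hch, Matrix.det_mul, Matrix.det_mul]
  calc (Uc.map C).det * (charmatrix A).det * ((star Uc).map C).det
      = (charmatrix A).det * ((Uc.map C).det * ((star Uc).map C).det) := by ring
    _ = (charmatrix A).det := by rw [hdet, mul_one]

open Polynomial in
lemma burnin_eig_sum {d : ℕ} (v : Fin d → ℝ) (h : (Matrix.diagonal v).IsHermitian) (f : ℝ → ℝ) :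
    ∑ i, f (h.eigenvalues i) = ∑ i, f (v i) := by
  have charpoly_diag : ∀ w : Fin d → ℝ,
      (Matrix.diagonal w).charpoly = ∏ i : Fin d, (X - C (w i)) := by
    intro w
    rw [Matrix.charpoly]
    have : charmatrix (Matrix.diagonal w) = Matrix.diagonal (fun i => (X : ℝ[X]) - C (w i)) := by
      ext i j
      by_cases hij : i = j
      · subst hij; simp [Matrix.charmatrix_apply_eq]
      · simp [Matrix.charmatrix_apply_ne _ _ _ hij, Matrix.diagonal_apply_ne _ hij]
    rw [this, Matrix.det_diagonal]
  have hc : (Matrix.diagonal v).charpoly = (Matrix.diagonal h.eigenvalues).charpoly := by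
    have hofr : (RCLike.ofReal ∘ h.eigenvalues : Fin d → ℝ) = h.eigenvalues := by
      ext i; simp
    conv_lhs => rw [h.spectral_theorem]
    rw [hofr]
    exact burnin_charpoly_conj h.eigenvectorUnitary _
  rw [charpoly_diag, charpoly_diag] at hc
  have hmp : ∀ w : Fin d → ℝ, (∏ i : Fin d, ((X : ℝ[X]) - C (w i)))
      = ((Finset.univ.val.map w).map (fun a => X - C a)).prod := by
    intro w
    rw [Multiset.map_map, Finset.prod_eq_multiset_prod]
    rfl
  have hm : (Finset.univ.val.map v) = (Finset.univ.val.map h.eigenvalues) := by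
    have := congrArg Polynomial.roots hc
    rwa [hmp, hmp, Polynomial.roots_multiset_prod_X_sub_C,
      Polynomial.roots_multiset_prod_X_sub_C] at this
  calc ∑ i, f (h.eigenvalues i) = ((Finset.univ.val.map h.eigenvalues).map f).sum := by
        rw [Multiset.map_map, Finset.sum_eq_multiset_sum]; rfl
    _ = ((Finset.univ.val.map v).map f).sum := by rw [hm]
    _ = ∑ i, f (v i) := by rw [Multiset.map_map, Finset.sum_eq_multiset_sum]; rfl

/-- Tightness of the burn-in term: the diagonal example with standard basis
vector actions. -/
theorem burn_in_tight {d : ℕ} (lam : Fin d → ℝ) (hlam : ∀ i, 0 < lam i)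
    (V : ℕ → Matrix (Fin d) (Fin d) ℝ)
    (hV0 : V 0 = Matrix.diagonal lam)
    (hrec : ∀ t : Fin d,
      V ((t : ℕ) + 1) = V (t : ℕ) + vecMulVec (Pi.single t 1) (Pi.single t 1))
    (p : ℝ) (hp0 : 0 < p) (hp1 : p ≤ 1) :
    (∑ t : Fin d, mnorm (V (t : ℕ))⁻¹ (Pi.single t 1) ^ (2 * p) =
        ∑ i : Fin d, lam i ^ (-p)) ∧
      ∑ i : Fin d, lam i ^ (-p) = (mpow (V 0) (-p)).trace := by
  constructor
  · -- explicit diagonal form of V n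
    have hVdiag : ∀ n : ℕ, n ≤ d →
        V n = Matrix.diagonal (fun i => lam i + if (i : ℕ) < n then 1 else 0) := by
      intro n
      induction n with
      | zero => intro _; simpa using hV0
      | succ n ih =>
        intro hn
        have hnd : n < d := Nat.lt_of_succ_le hn
        have hrecn := hrec ⟨n, hnd⟩
        simp only [Fin.val_mk] at hrecn
        rw [hrecn, ih (Nat.le_of_lt hnd)]
        have hvv : vecMulVec (Pi.single (⟨n, hnd⟩ : Fin d) (1:ℝ)) (Pi.single ⟨n, hnd⟩ 1)
            = Matrix.diagonal (Pi.single (⟨n, hnd⟩ : Fin d) (1:ℝ)) := by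
          ext i j
          simp only [vecMulVec_apply, Pi.single_apply, Matrix.diagonal_apply]
          split_ifs <;> simp_all
        rw [hvv, Matrix.diagonal_add]
        apply congrArg Matrix.diagonal
        funext i
        rcases eq_or_ne i (⟨n, hnd⟩ : Fin d) with rfl | hi
        · simp [Pi.single_apply]
        · have hiv : (i : ℕ) ≠ n := by
            intro hcon
            exact hi (Fin.ext hcon)
          have : ((i : ℕ) < n + 1) ↔ ((i : ℕ) < n) := by omega
          simp [Pi.single_apply, hi, this]
    -- termwise computation
    apply Finset.sum_congr rfl
    intro t _
    have ht : (t : ℕ) ≤ d := Nat.le_of_lt t.isLt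
    set w : Fin d → ℝ := fun i => lam i + if (i : ℕ) < (t : ℕ) then 1 else 0 with hw
    have hwpos : ∀ i, 0 < w i := by
      intro i
      have := hlam i
      rcases lt_or_ge (i : ℕ) (t : ℕ) with h | h <;> simp [hw, h] <;> positivity
    have hVt : V (t : ℕ) = Matrix.diagonal w := hVdiag (t : ℕ) ht
    have hinv : (V (t : ℕ))⁻¹ = Matrix.diagonal (fun i => (w i)⁻¹) := by
      have hri : Ring.inverse w = fun i => (w i)⁻¹ := by
        let u : (Fin d → ℝ)ˣ :=
          ⟨w, fun i => (w i)⁻¹, by ext i; exact mul_inv_cancel₀ (hwpos i).ne',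
            by ext i; exact inv_mul_cancel₀ (hwpos i).ne'⟩
        exact Ring.inverse_unit u
      rw [hVt, Matrix.inv_diagonal, hri]
    have hdot : (Pi.single t (1:ℝ)) ⬝ᵥ ((V (t : ℕ))⁻¹ *ᵥ Pi.single t 1) = (lam t)⁻¹ := by
      rw [hinv, Matrix.diagonal_mulVec_single, single_dotProduct]
      simp [hw]
    rw [mnorm, hdot]
    have hlt : 0 < lam t := hlam t
    have h2 : (1 / 2 : ℝ) * (2 * p) = p := by ring
    rw [Real.sqrt_eq_rpow, ← Real.rpow_mul (by positivity), h2,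
      Real.inv_rpow hlt.le, ← Real.rpow_neg hlt.le]
  · -- trace computation
    rw [hV0]
    have hh : (Matrix.diagonal lam).IsHermitian := Matrix.isHermitian_diagonal _
    have hmp : mpow (Matrix.diagonal lam) (-p)
        = (hh.eigenvectorUnitary : Matrix (Fin d) (Fin d) ℝ) *
            Matrix.diagonal (fun i => hh.eigenvalues i ^ (-p)) *
            star (hh.eigenvectorUnitary : Matrix (Fin d) (Fin d) ℝ) := by
      rw [mpow, dif_pos hh]
    rw [hmp, Matrix.trace_mul_cycle]
    have h1 : star (hh.eigenvectorUnitary : Matrix (Fin d) (Fin d) ℝ) *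
        (hh.eigenvectorUnitary : Matrix (Fin d) (Fin d) ℝ) = 1 :=
      (Unitary.mem_iff.mp hh.eigenvectorUnitary.2).1
    rw [h1, Matrix.one_mul, Matrix.trace_diagonal]
    exact (burnin_eig_sum lam hh (fun x => x ^ (-p))).symm
end

section
/- Let Σ₀ be a d×d real symmetric positive definite matrix, let σ > 0, r > 0, and let A₀, …, A_{T−1} ∈ ℝᵈ satisfy ‖A_t‖₂ ≤ r for all t. Then log det(I_d + σ⁻² Σ₀ ∑_{t=0}^{T−1} A_t A_tᵀ) ≤ d log(1 + r² ‖Σ₀‖_op T / (d σ²)), where ‖Σ₀‖_op denotes the operator (largest-eigenvalue) norm of Σ₀. -/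
/-!
Writing `Σ₀ = Bᴴ B`, Sylvester's identity `det (1 + Bᴴ (B M)) = det (1 + B M Bᴴ)` turns the
determinant into that of a positive definite matrix `P`. By AM–GM on its eigenvalues,
`det P ≤ (tr P / d) ^ d`, and `tr P = d + tr (Σ₀ M)` with
`tr (Σ₀ A Aᵀ) = Aᵀ Σ₀ A ≤ ‖Σ₀‖ ‖A‖²`.
-/

open Matrix
open scoped Matrix.Norms.L2Operator
open scoped MatrixOrder

open Finset in
theorem Real.prod_le_arith_mean_pow {ι : Type*} (s : Finset ι) {z : ι → ℝ}
    (hz : ∀ i ∈ s, 0 ≤ z i) : ∏ i ∈ s, z i ≤ ((∑ i ∈ s, z i) / #s) ^ #s := by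
  rcases s.eq_empty_or_nonempty with rfl | hs
  · simp
  have amgm := Real.geom_mean_le_arith_mean s (fun _ ↦ 1) z (fun _ _ ↦ zero_le_one)
    (by simpa using hs) hz
  simp only [Real.rpow_one, sum_const, nsmul_eq_mul, mul_one, one_mul] at amgm
  calc ∏ i ∈ s, z i = ((∏ i ∈ s, z i) ^ (#s : ℝ)⁻¹) ^ #s :=
        (Real.rpow_inv_natCast_pow (prod_nonneg hz) (by simpa using hs.ne_empty)).symm
    _ ≤ _ := pow_le_pow_left₀ (by have := prod_nonneg hz; positivity) amgm _

namespace Matrix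

variable {n : Type*} [Fintype n] [DecidableEq n]

theorem PosSemidef.det_le_trace_div_card_pow {A : Matrix n n ℝ}
    (hA : A.PosSemidef) : A.det ≤ (A.trace / Fintype.card n) ^ Fintype.card n := by
  rw [hA.isHermitian.det_eq_prod_eigenvalues, hA.isHermitian.trace_eq_sum_eigenvalues]
  simpa using Real.prod_le_arith_mean_pow Finset.univ fun i _ ↦ hA.eigenvalues_nonneg i

theorem dotProduct_mulVec_self_le_l2_opNorm_mul (S : Matrix n n ℝ) (a : n → ℝ) :
    a ⬝ᵥ (S *ᵥ a) ≤ ‖S‖ * (a ⬝ᵥ a) := by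
  set x : EuclideanSpace ℝ n := WithLp.toLp 2 a
  have hx : ‖x‖ ^ 2 = a ⬝ᵥ a := by
    rw [EuclideanSpace.norm_sq_eq]; simp [x, dotProduct, sq]
  calc a ⬝ᵥ (S *ᵥ a) = inner ℝ x (WithLp.toLp 2 (S *ᵥ a)) := by
        simp [x, dotProduct, PiLp.inner_apply, mul_comm]
    _ ≤ ‖x‖ * (‖S‖ * ‖x‖) := (real_inner_le_norm _ _).trans
        (mul_le_mul_of_nonneg_left (S.l2_opNorm_mulVec x) (norm_nonneg x))
    _ = ‖S‖ * (a ⬝ᵥ a) := by rw [← hx]; ring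

open Finset in
theorem trace_mul_sum_vecMulVec_self_le {ι : Type*} (S : Matrix n n ℝ) (s : Finset ι)
    {a : ι → n → ℝ} {ρ : ℝ} (ha : ∀ i ∈ s, a i ⬝ᵥ a i ≤ ρ) :
    (S * ∑ i ∈ s, vecMulVec (a i) (a i)).trace ≤ #s * (‖S‖ * ρ) := by
  rw [mul_sum, trace_sum, ← nsmul_eq_mul, ← sum_const]
  refine sum_le_sum fun i hi ↦ ?_
  rw [mul_vecMulVec, trace_vecMulVec, dotProduct_comm]
  exact (S.dotProduct_mulVec_self_le_l2_opNorm_mul (a i)).trans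
    (mul_le_mul_of_nonneg_left (ha i hi) (norm_nonneg S))

theorem PosSemidef.log_det_one_add_mul_le {S M : Matrix n n ℝ} (hS : S.PosSemidef)
    (hM : M.PosSemidef) {τ : ℝ} (hτ : (S * M).trace ≤ τ) :
    Real.log (1 + S * M).det ≤ Fintype.card n * Real.log (1 + τ / Fintype.card n) := by
  obtain ⟨B, rfl⟩ := CStarAlgebra.nonneg_iff_eq_star_mul_self.mp hS.nonneg
  set P := 1 + B * M * star B
  have hP : P.PosDef := PosDef.one.add_posSemidef (by
    simpa only [star_eq_conjTranspose, conjTranspose_conjTranspose] using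
      hM.conjTranspose_mul_mul_same Bᴴ)
  have hdet : (1 + star B * B * M).det = P.det := by
    rw [mul_assoc, det_one_add_mul_comm]
  have htrace : P.trace / Fintype.card n ≤ 1 + τ / Fintype.card n := by
    rw [trace_add, trace_one, trace_mul_cycle, add_div]
    exact add_le_add (div_self_le_one _) (by gcongr)
  calc Real.log (1 + star B * B * M).det
      ≤ Real.log ((1 + τ / Fintype.card n) ^ Fintype.card n) := by
        rw [hdet]
        exact Real.log_le_log hP.det_pos (hP.posSemidef.det_le_trace_div_card_pow.trans
          (pow_le_pow_left₀ (by have := hP.posSemidef.trace_nonneg; positivity) htrace _))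
    _ = _ := Real.log_pow _ _

end Matrix

theorem log_det_bound_general {d T : ℕ} (S : Matrix (Fin d) (Fin d) ℝ) (hS : S.PosDef)
    (σ r : ℝ)
    (A : ℕ → Fin d → ℝ) (hA : ∀ t < T, Real.sqrt (A t ⬝ᵥ A t) ≤ r) :
    Real.log (1 + (σ ^ 2)⁻¹ •
        (S * ∑ t ∈ Finset.range T, vecMulVec (A t) (A t))).det ≤
      d * Real.log (1 + r ^ 2 * ‖S‖ * T / (d * σ ^ 2)) := by
  set M := (σ ^ 2)⁻¹ • ∑ t ∈ Finset.range T, vecMulVec (A t) (A t)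
  have hM : M.PosSemidef :=
    (posSemidef_sum _ fun t _ ↦ posSemidef_vecMulVec_self_star (A t)).smul (by positivity)
  have hτ : (S * M).trace ≤ r ^ 2 * ‖S‖ * T / σ ^ 2 := by
    have hA' : ∀ t ∈ Finset.range T, A t ⬝ᵥ A t ≤ r ^ 2 :=
      fun t ht ↦ (Real.sqrt_le_iff.mp (hA t (Finset.mem_range.mp ht))).2
    rw [mul_smul_comm, trace_smul, smul_eq_mul, div_eq_inv_mul]
    grw [trace_mul_sum_vecMulVec_self_le S _ hA']
    simp only [Finset.card_range]
    linarith
  rw [← mul_smul_comm]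
  calc _ ≤ d * Real.log (1 + r ^ 2 * ‖S‖ * T / σ ^ 2 / d) := by
        simpa only [Fintype.card_fin] using hS.posSemidef.log_det_one_add_mul_le hM hτ
    _ = _ := by rw [div_div, mul_comm (σ ^ 2)]

/-- The log-determinant bound used to control term (I) in the regret analysis.
Here `‖S‖` is the `ℓ₂`-operator norm of `S = Σ₀` (its largest eigenvalue, as it
is symmetric positive definite). -/
theorem log_det_bound {d T : ℕ} (S : Matrix (Fin d) (Fin d) ℝ) (hS : S.PosDef)
    (σ r : ℝ) (hσ : 0 < σ) (hr : 0 < r)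
    (A : ℕ → Fin d → ℝ) (hA : ∀ t < T, Real.sqrt (A t ⬝ᵥ A t) ≤ r) :
    Real.log (1 + (σ ^ 2)⁻¹ •
        (S * ∑ t ∈ Finset.range T, vecMulVec (A t) (A t))).det ≤
      d * Real.log (1 + r ^ 2 * ‖S‖ * T / (d * σ ^ 2)) :=
  log_det_bound_general S hS σ r A hA
end
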